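/- arXiv:1009.1308 — 7 statements merged into one kernel-verified Lean document; each statement's English description precedes it below -/
import Mathlib

section
/- For every integer m ≥ 1, s_p(m) - s_p(m-1) ≤ 1 when 0 ≤ p ≤ 1, where s_p is the weighted binary digit sum. -/
open Finset

/-- Weighted binary digit sum: `s_p(n) = ∑_j 2^{pj} ε_j(n)`. -/
noncomputable def sWeight (p : ℝ) (n : ℕ) : ℝ :=
  ∑ j ∈ Finset.range n, if n.testBit j then (2:ℝ) ^ (p * (j:ℝ)) else 0

/-- `S_p(n) = ∑_{m=0}^{n-1} s_p(m)`. -/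
noncomputable def SWeight (p : ℝ) (n : ℕ) : ℝ :=
  ∑ m ∈ Finset.range n, sWeight p m

/-! Peeling off the last binary digit, `s_p(2q) = 2^p s_p(q)` and `s_p(2q+1) = 1 + 2^p s_p(q)`.
So an increment from even to odd adds exactly `1`, while
`s_p(2q+2) - s_p(2q+1) = 2^p (s_p(q+1) - s_p(q)) - 1 ≤ 2^p - 1 ≤ 1` by induction on `q`,
since `2^p ≤ 2`. -/

theorem sWeight_eq_sum_range_of_le (p : ℝ) {n N : ℕ} (h : n ≤ N) :
    sWeight p n = ∑ j ∈ range N, if n.testBit j then (2:ℝ) ^ (p * j) else 0 := by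
  refine sum_subset (range_subset_range.2 h) fun j _ hj => ?_
  have hlt : n < 2 ^ j := (not_lt.1 (mem_range.not.1 hj)).trans_lt j.lt_two_pow_self
  simp [Nat.testBit_lt_two_pow hlt]

theorem sWeight_eq_mod_two_add (p : ℝ) (n : ℕ) :
    sWeight p n = (n % 2 : ℕ) + 2 ^ p * sWeight p (n / 2) := by
  rw [sWeight_eq_sum_range_of_le p n.le_succ, sum_range_succ', add_comm,
    sWeight_eq_sum_range_of_le p (Nat.div_le_self n 2), mul_sum]
  congr 1
  · rcases Nat.mod_two_eq_zero_or_one n with h | h <;> simp [Nat.testBit_zero, h]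
  · refine sum_congr rfl fun j _ => ?_
    rw [Nat.testBit_succ]
    split_ifs
    · rw [← Real.rpow_add two_pos]
      push_cast
      ring_nf
    · rw [mul_zero]

theorem sWeight_two_mul (p : ℝ) (n : ℕ) : sWeight p (2 * n) = 2 ^ p * sWeight p n := by
  simp [sWeight_eq_mod_two_add p (2 * n)]

theorem sWeight_two_mul_add_one (p : ℝ) (n : ℕ) :
    sWeight p (2 * n + 1) = 1 + 2 ^ p * sWeight p n := by
  rw [sWeight_eq_mod_two_add p (2 * n + 1)]
  norm_num [Nat.add_mod, show (2 * n + 1) / 2 = n by omega]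

theorem sWeight_succ_sub_le_one {p : ℝ} (hp : p ≤ 1) (n : ℕ) :
    sWeight p (n + 1) - sWeight p n ≤ 1 := by
  have h2p : (2:ℝ) ^ p ≤ 2 := by
    simpa using Real.rpow_le_rpow_of_exponent_le one_le_two hp
  induction n using Nat.evenOddRec with
  | h0 => simp [sWeight]
  | h_even q _ => simp [sWeight_two_mul, sWeight_two_mul_add_one]
  | h_odd q ih =>
    have hsucc : 2 * q + 1 + 1 = 2 * (q + 1) := by ring
    rw [hsucc, sWeight_two_mul, sWeight_two_mul_add_one]
    have hscaled : 2 ^ p * (sWeight p (q + 1) - sWeight p q) ≤ 2 ^ p * 1 :=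
      mul_le_mul_of_nonneg_left ih (Real.rpow_nonneg zero_le_two p)
    linarith

theorem sWeight_succ_diff_le_one_general (p : ℝ) (hp1 : p ≤ 1)
    (m : ℕ) :
    sWeight p m - sWeight p (m - 1) ≤ 1 := by
  cases m with
  | zero => simp
  | succ n => simpa using sWeight_succ_sub_le_one hp1 n

theorem sWeight_succ_diff_le_one (p : ℝ) (hp0 : 0 ≤ p) (hp1 : p ≤ 1)
    (m : ℕ) (hm : 1 ≤ m) :
    sWeight p m - sWeight p (m - 1) ≤ 1 :=
  sWeight_succ_diff_le_one_general p hp1 m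
end

section
/- For 0 ≤ p ≤ 1, all integers m ≥ 0 and all integers l with 0 ≤ l ≤ m, the inequality S_p(m+l) + S_p(m-l) - 2 S_p(m) ≤ l^{p+1} holds. -/
open Finset

/-!
Put `x = 2^p / 2`. Summing by parts over the binary digits,
`s_p(k) = (1 - x) ∑_J x^J (k mod 2^(J+1)) + x^B k` for `k < 2^B`, so `S_p` is a combination,
with nonnegative weights since `p ≤ 1`, of the residue sums `R_M(n) = ∑_{k<n} (k mod M)` and of
`∑_{k<n} k`. Now `2 R_M(n) = (M - 1) n - r (M - r)` with `r = n mod M`, and `r (M - r)` is the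
`M`-periodic upper envelope of the parabolas `(n - kM)((k + 1)M - n)`; hence the second difference
of `R_M` with step `l` is at most `d_M(l)^2`, where `d_M(l)` is the distance from `l` to `Mℤ`.
This bounds the left-hand side by `F(l) = (1 - x) ∑_J x^J d_{2^(J+1)}(l)^2 + x^B l^2`, which
satisfies `F(2t) = 2^(p+1) F(t)` and `F(2t+1) = 1 - 2^p + 2^p (F(t) + F(t+1))`. So
`F(l) ≤ l^(p+1)` follows by induction on the binary length of `l`, the odd step being
`(u - 1)^(p+1) + (u + 1)^(p+1) - 2 u^(p+1) ≤ 2^(p+1) - 2` for `u ≥ 1`, whose left-hand side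
decreases in `u` by concavity of `u ↦ u^p`.
-/

def modParabola (M n : ℤ) : ℤ := n % M * (M - n % M)

section modParabola

variable {M : ℤ}

lemma modParabola_add_mul (n j : ℤ) : modParabola M (n + j * M) = modParabola M n := by
  simp only [modParabola, Int.add_mul_emod_self_right]

lemma modParabola_add_one (hM : 0 < M) (n : ℤ) :
    modParabola M (n + 1) = modParabola M n + M - 1 - 2 * (n % M) := by
  have hr0 := Int.emod_nonneg n hM.ne'
  have hrM := Int.emod_lt_of_pos n hM
  have hshift : (n + 1) % M = (n % M + 1) % M := by
    rw [Int.emod_def n M, show n - M * (n / M) + 1 = n + 1 + -(n / M) * M by ring,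
      Int.add_mul_emod_self_right]
  unfold modParabola
  rw [hshift]
  generalize n % M = r at hr0 hrM ⊢
  rcases (Int.add_one_le_iff.mpr hrM).lt_or_eq with h | h
  · rw [Int.emod_eq_of_lt (by omega) h]; ring
  · rw [h, Int.emod_self]; linear_combination (r + 1) * h

lemma mul_sub_le_modParabola (hM : 0 < M) (k n : ℤ) :
    (n - k * M) * ((k + 1) * M - n) ≤ modParabola M n := by
  have hr0 := Int.emod_nonneg n hM.ne'
  have hrM := Int.emod_lt_of_pos n hM
  have hn : n = n / M * M + n % M := by rw [Int.emod_def]; ring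
  unfold modParabola
  generalize n / M = q at hn
  generalize n % M = r at hn hr0 hrM ⊢
  subst hn
  have hgap : r * (M - r) - (q * M + r - k * M) * ((k + 1) * M - (q * M + r))
      = (q - k) * M * (2 * r + (q - k - 1) * M) := by ring
  have hsign : 0 ≤ (q - k) * (2 * r + (q - k - 1) * M) := by
    rcases lt_trichotomy q k with h | rfl | h
    · exact mul_nonneg_of_nonpos_of_nonpos (by linarith) (by nlinarith)
    · simp
    · exact mul_nonneg (by linarith) (by nlinarith)
  linarith [mul_nonneg hM.le hsign]

lemma two_mul_modParabola_sub_le (hM : 0 < M) (m l j : ℤ) :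
    2 * modParabola M m - modParabola M (m + l) - modParabola M (m - l)
      ≤ 2 * (l - j * M) ^ 2 := by
  -- by periodicity `l` may be replaced by `d = l - j M`; the parabola of the arch containing `m`
  -- agrees with `modParabola M` at `m` and lies below it at `m ± d`
  set d := l - j * M
  have hplus : modParabola M (m + l) = modParabola M (m + d + j * M) := by
    rw [show m + d + j * M = m + l by ring]
  have hminus : modParabola M (m - l) = modParabola M (m - d + -j * M) := by
    rw [show m - d + -j * M = m - l by ring]
  rw [hplus, hminus, modParabola_add_mul, modParabola_add_mul]
  have hm : modParabola M m = (m - m / M * M) * ((m / M + 1) * M - m) := by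
    rw [modParabola, Int.emod_def]; ring
  have hup := mul_sub_le_modParabola hM (m / M) (m + d)
  have hdown := mul_sub_le_modParabola hM (m / M) (m - d)
  linear_combination hup + hdown + 2 * hm

end modParabola

def distToMultiple (M l : ℕ) : ℕ := min (l % M) (M - l % M)

section distToMultiple

variable {M : ℕ}

lemma distToMultiple_two_two_mul (t : ℕ) : distToMultiple 2 (2 * t) = 0 := by
  unfold distToMultiple; omega

lemma distToMultiple_two_two_mul_add_one (t : ℕ) : distToMultiple 2 (2 * t + 1) = 1 := by
  unfold distToMultiple; omega

lemma distToMultiple_two_mul (t : ℕ) :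
    distToMultiple (2 * M) (2 * t) = 2 * distToMultiple M t := by
  unfold distToMultiple; rw [Nat.mul_mod_mul_left]; omega

lemma distToMultiple_two_mul_add_one (hM : Even M) (t : ℕ) :
    distToMultiple (2 * M) (2 * t + 1) = distToMultiple M t + distToMultiple M (t + 1) := by
  obtain ⟨k, rfl⟩ := hM
  rcases k.eq_zero_or_pos with rfl | hk
  · simp [distToMultiple]
  have hlt := Nat.mod_lt t (show 0 < k + k by omega)
  unfold distToMultiple
  rw [Nat.add_mod_eq_ite, Nat.add_mod_eq_ite (m := t), Nat.mul_mod_mul_left,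
    Nat.mod_eq_of_lt (show 1 < 2 * (k + k) by omega), Nat.mod_eq_of_lt (show 1 < k + k by omega)]
  split_ifs <;> omega

lemma distToMultiple_add_one (hM : Even M) (hM0 : 0 < M) (t : ℕ) :
    distToMultiple M (t + 1) = distToMultiple M t + 1 ∨
      distToMultiple M t = distToMultiple M (t + 1) + 1 := by
  obtain ⟨k, rfl⟩ := hM
  have hlt := Nat.mod_lt t hM0
  unfold distToMultiple
  rw [Nat.add_mod_eq_ite, Nat.mod_eq_of_lt (show 1 < k + k by omega)]
  split_ifs <;> omega

end distToMultiple

def residueSum (M n : ℕ) : ℤ := ∑ k ∈ range n, ((k % M : ℕ) : ℤ)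

lemma two_mul_residueSum {M : ℕ} (hM : 0 < M) (n : ℕ) :
    2 * residueSum M n = (M - 1) * n - modParabola M n := by
  induction n with
  | zero => simp [residueSum, modParabola]
  | succ n ih =>
    rw [residueSum, sum_range_succ, ← residueSum, mul_add, ih, Nat.cast_succ,
      modParabola_add_one (by exact_mod_cast hM)]
    push_cast
    ring

lemma residueSum_secondDiff_le {M : ℕ} (hM : 0 < M) {m l : ℕ} (hlm : l ≤ m) :
    residueSum M (m + l) + residueSum M (m - l) - 2 * residueSum M m
      ≤ (distToMultiple M l : ℤ) ^ 2 := by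
  have hM' : (0 : ℤ) < M := by exact_mod_cast hM
  have hsecond : 2 * (residueSum M (m + l) + residueSum M (m - l) - 2 * residueSum M m)
      = 2 * modParabola M m - modParabola M (m + l) - modParabola M (m - l) := by
    rw [mul_sub, mul_add, two_mul_residueSum hM, two_mul_residueSum hM, mul_left_comm,
      two_mul_residueSum hM]
    push_cast [hlm]
    ring
  have hlt : l % M < M := Nat.mod_lt l hM
  have hmod : ((l % M : ℕ) : ℤ) = l - (l / M : ℤ) * M := by
    push_cast; rw [Int.emod_def]; ring
  rcases min_choice (l % M) (M - l % M) with h | h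
  · have := two_mul_modParabola_sub_le hM' m l (l / M)
    rw [distToMultiple, h, hmod]
    linarith
  · have := two_mul_modParabola_sub_le hM' m l (l / M + 1)
    rw [distToMultiple, h, Nat.cast_sub hlt.le, hmod]
    nlinarith

lemma sum_testBit_pow_eq (q : ℝ) (k B : ℕ) :
    ∑ j ∈ range B, (if k.testBit j then q ^ j else 0)
      = (1 - q / 2) * ∑ J ∈ range B, (q / 2) ^ J * ((k % 2 ^ (J + 1) : ℕ) : ℝ)
        + (q / 2) ^ B * ((k % 2 ^ B : ℕ) : ℝ) := by
  induction B with
  | zero => simp [Nat.mod_one]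
  | succ B ih =>
    have hpow : (q / 2) ^ B * 2 ^ B = q ^ B := by rw [← mul_pow, div_mul_cancel₀ q two_ne_zero]
    rw [sum_range_succ, ih, sum_range_succ, Nat.mod_pow_succ, Nat.testBit_eq_decide_div_mod_eq]
    rcases Nat.mod_two_eq_zero_or_one (k / 2 ^ B) with h | h
    · simp only [h, zero_ne_one, decide_false, Bool.false_eq_true, if_false]
      push_cast
      ring
    · simp only [h, decide_true, if_true]
      push_cast
      linear_combination -hpow

lemma sWeight_eq (p : ℝ) {k B : ℕ} (hkB : k ≤ B) :
    sWeight p k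
      = (1 - 2 ^ p / 2) * ∑ J ∈ range B, (2 ^ p / 2 : ℝ) ^ J * ((k % 2 ^ (J + 1) : ℕ) : ℝ)
        + (2 ^ p / 2 : ℝ) ^ B * k := by
  have hbits :
      sWeight p k = ∑ j ∈ range B, (if k.testBit j then ((2 : ℝ) ^ p) ^ j else 0) := by
    simp only [sWeight, Real.rpow_mul zero_le_two, Real.rpow_natCast]
    refine sum_subset (range_subset_range.mpr hkB) fun j _ hj ↦ ?_
    have hkj : k < 2 ^ j :=
      k.lt_two_pow_self.trans_le (Nat.pow_le_pow_right two_pos (by simpa using hj))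
    simp [Nat.testBit_lt_two_pow hkj]
  rw [hbits, sum_testBit_pow_eq,
    Nat.mod_eq_of_lt (k.lt_two_pow_self.trans_le (Nat.pow_le_pow_right two_pos hkB))]

lemma SWeight_eq (p : ℝ) {n B : ℕ} (hnB : n ≤ B) :
    SWeight p n
      = (1 - 2 ^ p / 2) * ∑ J ∈ range B, (2 ^ p / 2 : ℝ) ^ J * residueSum (2 ^ (J + 1)) n
        + (2 ^ p / 2 : ℝ) ^ B * ∑ k ∈ range n, (k : ℝ) := by
  rw [SWeight, sum_congr rfl fun k hk ↦ sWeight_eq p ((mem_range.mp hk).le.trans hnB),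
    sum_add_distrib, ← mul_sum, ← mul_sum, sum_comm]
  simp only [residueSum, Int.cast_sum, Int.cast_natCast, mul_sum]

lemma two_mul_sum_range_natCast (n : ℕ) :
    2 * ∑ k ∈ range n, (k : ℝ) = (n : ℝ) ^ 2 - n := by
  induction n with
  | zero => simp
  | succ n ih => rw [sum_range_succ, mul_add, ih]; push_cast; ring

lemma sum_range_natCast_secondDiff {m l : ℕ} (hlm : l ≤ m) :
    ∑ k ∈ range (m + l), (k : ℝ) + ∑ k ∈ range (m - l), (k : ℝ)
      - 2 * ∑ k ∈ range m, (k : ℝ) = (l : ℝ) ^ 2 := by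
  have hadd := two_mul_sum_range_natCast (m + l)
  have hsub := two_mul_sum_range_natCast (m - l)
  have hmid := two_mul_sum_range_natCast m
  push_cast [hlm] at hadd hsub
  linear_combination (hadd + hsub - 2 * hmid) / 2

noncomputable def dyadicDistSqSum (x : ℝ) (K l : ℕ) : ℝ :=
  (1 - x) * ∑ J ∈ range K, x ^ J * (distToMultiple (2 ^ (J + 1)) l : ℝ) ^ 2
    + x ^ K * (l : ℝ) ^ 2

lemma dyadicDistSqSum_zero (x : ℝ) (l : ℕ) : dyadicDistSqSum x 0 l = (l : ℝ) ^ 2 := by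
  simp [dyadicDistSqSum]

lemma dyadicDistSqSum_succ_two_mul (x : ℝ) (K t : ℕ) :
    dyadicDistSqSum x (K + 1) (2 * t) = 4 * x * dyadicDistSqSum x K t := by
  have hterm (J : ℕ) : x ^ (J + 1) * (distToMultiple (2 ^ (J + 1 + 1)) (2 * t) : ℝ) ^ 2
      = 4 * x * (x ^ J * (distToMultiple (2 ^ (J + 1)) t : ℝ) ^ 2) := by
    rw [pow_succ 2 (J + 1), mul_comm _ 2, distToMultiple_two_mul]
    push_cast
    ring
  rw [dyadicDistSqSum, sum_range_succ', zero_add, pow_one, distToMultiple_two_two_mul,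
    sum_congr rfl fun J _ ↦ hterm J, ← mul_sum, dyadicDistSqSum]
  push_cast
  ring

lemma dyadicDistSqSum_succ_two_mul_add_one (x : ℝ) (K t : ℕ) :
    dyadicDistSqSum x (K + 1) (2 * t + 1)
      = 1 - 2 * x + 2 * x * (dyadicDistSqSum x K t + dyadicDistSqSum x K (t + 1)) := by
  -- consecutive distances differ by one, so `(a + b)^2 = 2 a^2 + 2 b^2 - 1`
  have hterm (J : ℕ) : x ^ (J + 1) * (distToMultiple (2 ^ (J + 1 + 1)) (2 * t + 1) : ℝ) ^ 2
      = 2 * x * (x ^ J * (distToMultiple (2 ^ (J + 1)) t : ℝ) ^ 2)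
        + 2 * x * (x ^ J * (distToMultiple (2 ^ (J + 1)) (t + 1) : ℝ) ^ 2) - x * x ^ J := by
    have heven : Even (2 ^ (J + 1)) := (Nat.even_pow' J.succ_ne_zero).mpr even_two
    rw [pow_succ 2 (J + 1), mul_comm _ 2, distToMultiple_two_mul_add_one heven]
    rcases distToMultiple_add_one heven (by positivity) t with h | h <;>
      · rw [h]; push_cast; ring
  have hgeom : (1 - x) * ∑ J ∈ range K, x ^ J = 1 - x ^ K := by
    linear_combination -geom_sum_mul x K
  rw [dyadicDistSqSum, sum_range_succ', zero_add, pow_one, distToMultiple_two_two_mul_add_one,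
    sum_congr rfl fun J _ ↦ hterm J, sum_sub_distrib, sum_add_distrib, ← mul_sum, ← mul_sum,
    ← mul_sum, dyadicDistSqSum, dyadicDistSqSum]
  push_cast
  linear_combination (-x) * hgeom

section

variable {p : ℝ}

lemma rpow_sub_one_add_rpow_add_one_le (hp0 : 0 ≤ p) (hp1 : p ≤ 1) {u : ℝ} (hu : 1 ≤ u) :
    (u - 1) ^ p + (u + 1) ^ p ≤ 2 * u ^ p := by
  have h := (Real.concaveOn_rpow hp0 hp1).2 (Set.mem_Ici.mpr (by linarith : (0 : ℝ) ≤ u - 1))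
    (Set.mem_Ici.mpr (by linarith : (0 : ℝ) ≤ u + 1)) (by norm_num : (0 : ℝ) ≤ 1 / 2)
    (by norm_num : (0 : ℝ) ≤ 1 / 2) (by norm_num)
  simp only [smul_eq_mul] at h
  rw [show 1 / 2 * (u - 1) + 1 / 2 * (u + 1) = u by ring] at h
  linarith

lemma rpow_secondDiff_le (hp0 : 0 ≤ p) (hp1 : p ≤ 1) {u : ℝ} (hu : 1 ≤ u) :
    (u - 1) ^ (p + 1) + (u + 1) ^ (p + 1) - 2 * u ^ (p + 1) ≤ 2 ^ (p + 1) - 2 := by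
  set g : ℝ → ℝ := fun u ↦ (u - 1) ^ (p + 1) + (u + 1) ^ (p + 1) - 2 * u ^ (p + 1) with hg
  have hderiv : ∀ u > 1,
      HasDerivAt g ((p + 1) * ((u - 1) ^ p + (u + 1) ^ p - 2 * u ^ p)) u := by
    intro u hu
    have h₁ := ((hasDerivAt_id u).sub_const 1).rpow_const (p := p + 1)
      (Or.inl (by simp; linarith))
    have h₂ := ((hasDerivAt_id u).add_const 1).rpow_const (p := p + 1)
      (Or.inl (by simp; linarith))
    have h₃ := (hasDerivAt_id u).rpow_const (p := p + 1) (Or.inl (by simp; linarith))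
    exact ((h₁.add h₂).sub (h₃.const_mul 2)).congr_deriv
      (by simp only [id, add_sub_cancel_right]; ring)
  have hanti : AntitoneOn g (Set.Ici 1) := by
    refine antitoneOn_of_deriv_nonpos (convex_Ici 1) ?_ ?_ ?_
    · refine (ContinuousOn.add ?_ ?_).sub (continuousOn_const.mul ?_) <;>
        exact ContinuousOn.rpow_const (by fun_prop) fun _ _ ↦ Or.inr (by linarith)
    · rw [interior_Ici]
      exact fun u hu ↦ (hderiv u hu).differentiableAt.differentiableWithinAt
    · rw [interior_Ici]
      intro u hu
      rw [(hderiv u hu).deriv]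
      have := rpow_sub_one_add_rpow_add_one_le hp0 hp1 (le_of_lt hu)
      nlinarith
  have := hanti Set.self_mem_Ici (Set.mem_Ici.mpr hu) hu
  simp only [hg, sub_self, one_add_one_eq_two, Real.one_rpow] at this
  rwa [Real.zero_rpow (by linarith), zero_add, mul_one] at this

lemma two_mul_rpow_add_one {y : ℝ} (hy : 0 ≤ y) :
    (2 * y) ^ (p + 1) = 2 * 2 ^ p * y ^ (p + 1) := by
  rw [Real.mul_rpow zero_le_two hy, Real.rpow_add_one two_ne_zero]
  ring

lemma dyadicDistSqSum_le_rpow (hp0 : 0 ≤ p) (hp1 : p ≤ 1) {K l : ℕ} (hl : l ≤ 2 ^ K) :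
    dyadicDistSqSum (2 ^ p / 2) K l ≤ (l : ℝ) ^ (p + 1) := by
  have hq : (0 : ℝ) < 2 ^ p := Real.rpow_pos_of_pos two_pos p
  induction K generalizing l with
  | zero =>
    rw [dyadicDistSqSum_zero]
    interval_cases l <;> simp [Real.zero_rpow (by linarith : p + 1 ≠ 0)]
  | succ K ih =>
    obtain ⟨t, rfl | rfl⟩ := Nat.even_or_odd' l
    · rw [dyadicDistSqSum_succ_two_mul, Nat.cast_mul, Nat.cast_two,
        two_mul_rpow_add_one t.cast_nonneg]
      have := mul_le_mul_of_nonneg_left (ih (l := t) (by rw [pow_succ] at hl; omega)) hq.le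
      linarith
    · rw [dyadicDistSqSum_succ_two_mul_add_one]
      have ht := ih (l := t) (by rw [pow_succ] at hl; omega)
      have ht₁ := ih (l := t + 1) (by rw [pow_succ] at hl; omega)
      have hsecond := rpow_secondDiff_le hp0 hp1 (u := 2 * t + 1)
        (by linarith [t.cast_nonneg (α := ℝ)])
      rw [add_sub_cancel_right, show (2 * t + 1 : ℝ) + 1 = 2 * (t + 1) by ring,
        two_mul_rpow_add_one t.cast_nonneg, two_mul_rpow_add_one (by positivity),
        Real.rpow_add_one two_ne_zero] at hsecond
      have hsum := mul_le_mul_of_nonneg_left (add_le_add ht ht₁) hq.le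
      push_cast at hsum ⊢
      linarith

lemma SWeight_secondDiff_le_dyadicDistSqSum (hp1 : p ≤ 1) {m l B : ℕ} (hlm : l ≤ m)
    (hB : m + l ≤ B) :
    SWeight p (m + l) + SWeight p (m - l) - 2 * SWeight p m
      ≤ dyadicDistSqSum (2 ^ p / 2) B l := by
  rw [SWeight_eq p hB, SWeight_eq p (by omega : m - l ≤ B), SWeight_eq p (by omega : m ≤ B),
    dyadicDistSqSum]
  have h2p : (2 : ℝ) ^ p ≤ 2 := by
    simpa using Real.rpow_le_rpow_of_exponent_le one_le_two hp1
  set x : ℝ := 2 ^ p / 2 with hx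
  have hx0 : 0 ≤ x := by positivity
  have hx1 : 0 ≤ 1 - x := by linarith
  have hres : ∑ J ∈ range B, x ^ J * residueSum (2 ^ (J + 1)) (m + l)
      + ∑ J ∈ range B, x ^ J * residueSum (2 ^ (J + 1)) (m - l)
      - 2 * ∑ J ∈ range B, x ^ J * residueSum (2 ^ (J + 1)) m
      ≤ ∑ J ∈ range B, x ^ J * (distToMultiple (2 ^ (J + 1)) l : ℝ) ^ 2 := by
    rw [← sum_add_distrib, mul_sum, ← sum_sub_distrib]
    refine sum_le_sum fun J _ ↦ ?_
    have := residueSum_secondDiff_le (M := 2 ^ (J + 1)) (by positivity) hlm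
    rw [← mul_add, mul_left_comm, ← mul_sub]
    exact mul_le_mul_of_nonneg_left (by exact_mod_cast this) (pow_nonneg hx0 J)
  have hgauss := congrArg (x ^ B * ·) (sum_range_natCast_secondDiff hlm)
  linarith [mul_le_mul_of_nonneg_left hres hx1]

end

theorem SWeight_midpoint_ineq (p : ℝ) (hp0 : 0 ≤ p) (hp1 : p ≤ 1)
    (m l : ℕ) (hlm : l ≤ m) :
    SWeight p (m + l) + SWeight p (m - l) - 2 * SWeight p m ≤ (l:ℝ) ^ (p + 1) :=
  (SWeight_secondDiff_le_dyadicDistSqSum hp1 hlm le_rfl).trans <|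
    dyadicDistSqSum_le_rpow hp0 hp1 <|
      l.lt_two_pow_self.le.trans (Nat.pow_le_pow_right two_pos (Nat.le_add_left l m))
end

section
/- For any integers 0 ≤ l ≤ m, the number of binary 1-digits needed to write the integers m, m+1, ..., m+l-1 is at most l more than the number of binary 1-digits needed to write m-l, ..., m-1. Equivalently, S_0(m+l) + S_0(m-l) - 2 S_0(m) ≤ l. -/
open Finset

theorem add_le_midpoint_of_halving {R : Type*} [CommRing R] [LinearOrder R] [IsStrictOrderedRing R]
    (S : ℕ → R) (hS : ∀ n, S n = S (n / 2) + S ((n + 1) / 2) + ((n / 2 : ℕ) : R))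
    {p q : ℕ} (hqp : q ≤ p) :
    S p + S q ≤ S ((p + q) / 2) + S ((p + q + 1) / 2) + ((p - q) / 2 : ℕ) := by
  induction p using Nat.strong_induction_on generalizing q with
  | _ p ih =>
  rcases Nat.lt_or_ge p (q + 2) with hpq | hpq
  · obtain ⟨hlo, hhi, hdist⟩ : (p + q) / 2 = q ∧ (p + q + 1) / 2 = p ∧ (p - q) / 2 = 0 := by
      omega
    rw [hlo, hhi, hdist, Nat.cast_zero, add_zero, add_comm]
  have ih₁ := ih ((p + 1) / 2) (by omega) (q := q / 2) (by omega)
  have ih₂ := ih (p / 2) (by omega) (q := (q + 1) / 2) (by omega)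
  have hpairs : S ((p + q) / 2) + S ((p + q + 1) / 2)
      = S ((p + 1) / 2 + q / 2) + S (p / 2 + (q + 1) / 2) := by
    rcases (by omega : ((p + 1) / 2 + q / 2 = (p + q) / 2 ∧ p / 2 + (q + 1) / 2 = (p + q + 1) / 2)
        ∨ ((p + 1) / 2 + q / 2 = (p + q + 1) / 2 ∧ p / 2 + (q + 1) / 2 = (p + q) / 2))
      with ⟨h₁, h₂⟩ | ⟨h₁, h₂⟩
    · rw [h₁, h₂]
    · rw [h₁, h₂, add_comm]
  have harith : ((p + 1) / 2 - q / 2) / 2 + (p / 2 - (q + 1) / 2) / 2 + p / 2 + q / 2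
      ≤ ((p + 1) / 2 + q / 2) / 2 + (p / 2 + (q + 1) / 2) / 2 + (p - q) / 2 := by
    omega
  have harith' := (Nat.cast_le (α := R)).2 harith
  push_cast at harith'
  linarith [hS p, hS q, hS ((p + 1) / 2 + q / 2), hS (p / 2 + (q + 1) / 2)]

theorem sWeight_zero_eq_sum_range {n N : ℕ} (h : n ≤ N) :
    sWeight 0 n = ∑ j ∈ range N, if n.testBit j then 1 else 0 := by
  simp only [sWeight, zero_mul, Real.rpow_zero]
  refine sum_subset (range_subset_range.2 h) fun j _ hj => ?_
  rw [Nat.testBit_lt_two_pow ((Nat.lt_two_pow_self).trans_le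
    (Nat.pow_le_pow_right two_pos (not_lt.1 (mem_range.not.1 hj))))]
  rfl

theorem sWeight_zero_eq_div_two (n : ℕ) : sWeight 0 n = sWeight 0 (n / 2) + (n % 2 : ℕ) := by
  rw [sWeight_zero_eq_sum_range (Nat.le_succ n), sum_range_succ',
    sWeight_zero_eq_sum_range (Nat.div_le_self n 2)]
  simp only [Nat.testBit_add_one, Nat.testBit_zero]
  congr 1
  rcases Nat.mod_two_eq_zero_or_one n with h | h <;> simp [h]

theorem SWeight_succ (p : ℝ) (n : ℕ) : SWeight p (n + 1) = SWeight p n + sWeight p n :=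
  sum_range_succ _ n

theorem SWeight_zero_eq_div_two (n : ℕ) :
    SWeight 0 n = SWeight 0 (n / 2) + SWeight 0 ((n + 1) / 2) + ((n / 2 : ℕ) : ℝ) := by
  induction n with
  | zero => simp [SWeight]
  | succ n ih =>
    rw [SWeight_succ, ih, sWeight_zero_eq_div_two n]
    obtain ⟨k, rfl | rfl⟩ := Nat.even_or_odd' n
    · rw [show (2 * k + 1) / 2 = k by omega, show (2 * k + 1 + 1) / 2 = k + 1 by omega,
        show 2 * k / 2 = k by omega, show 2 * k % 2 = 0 by omega, SWeight_succ]
      push_cast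
      ring
    · rw [show (2 * k + 1) / 2 = k by omega, show (2 * k + 1 + 1) / 2 = k + 1 by omega,
        show (2 * k + 1 + 1 + 1) / 2 = k + 1 by omega, show (2 * k + 1) % 2 = 1 by omega,
        SWeight_succ]
      push_cast
      ring

theorem SWeight_zero_midpoint_ineq (m l : ℕ) (hlm : l ≤ m) :
    SWeight 0 (m + l) + SWeight 0 (m - l) - 2 * SWeight 0 m ≤ (l:ℝ) := by
  have h := add_le_midpoint_of_halving (SWeight 0) SWeight_zero_eq_div_two
    (by omega : m - l ≤ m + l)
  rw [show (m + l + (m - l)) / 2 = m by omega, show (m + l + (m - l) + 1) / 2 = m by omega,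
    show (m + l - (m - l)) / 2 = l by omega] at h
  linarith
end

section
/- Let l ≥ 1 and let k be the integer with 2^{k-1} < l ≤ 2^k, and let 0 ≤ l ≤ m. Then S_0(m+l) + S_0(m-l) - 2 S_0(m) = l if and only if m ≡ l (mod 2^{k+1}) or m ≡ -l (mod 2^{k+1}). -/
open Finset

/-!
Put `n = l` and `d = m - l`, so that the left-hand side is
`secondDiff n d = S (2n + d) + S d - 2 S (n + d)`, with `S` the cumulative binary digit sum.
From `S (2x) = 2 S x + x` and `S (2x + 1) = 2 S x + x + s x`, splitting `n` and `d` by parity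
expresses `secondDiff` and its companion
`skewSecondDiff n d = S (2n + d + 1) + S d - S (n + d) - S (n + d + 1)` through the same two
quantities at roughly half the arguments. A joint induction shows that both are at most `n`, with
equality exactly when `2 ^ K` divides `d` or `d + 2n` (resp. `2 ^ H` divides `d` or `d + 2n + 1`),
where `K = secondDiffExp n` and `H = skewSecondDiffExp n` satisfy `2 ^ (K - 2) < n ≤ 2 ^ (K - 1)`
and `2 ^ (H - 2) ≤ n < 2 ^ (H - 1)` for `n ≥ 1`. Where the recursion adds
two terms, both must be extremal, and their equality conditions are incompatible by parity unless
the target condition holds.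
-/

namespace DigitSum

def digitSum (n : ℕ) : ℕ := n.bitIndices.length

lemma digitSum_two_mul (n : ℕ) : digitSum (2 * n) = digitSum n := by
  simp [digitSum]

lemma digitSum_two_mul_add_one (n : ℕ) : digitSum (2 * n + 1) = digitSum n + 1 := by
  simp [digitSum]

lemma sWeight_zero_eq_digitSum (n : ℕ) : sWeight 0 n = digitSum n := by
  have hfilter : (range n).filter (fun j => n.testBit j) = n.bitIndices.toFinset := by
    ext j
    simp only [mem_filter, mem_range, List.mem_toFinset, Nat.mem_bitIndices, and_iff_right_iff_imp]
    exact fun h => (Nat.lt_two_pow_self).trans_le (Nat.ge_two_pow_of_testBit h)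
  simp only [sWeight, zero_mul, Real.rpow_zero]
  rw [Finset.sum_boole, hfilter, List.toFinset_card_of_nodup Nat.bitIndices_nodup, digitSum]

def cumDigitSum (n : ℕ) : ℕ := ∑ m ∈ range n, digitSum m

lemma SWeight_zero_eq_cumDigitSum (n : ℕ) : SWeight 0 n = cumDigitSum n := by
  simp [SWeight, cumDigitSum, sWeight_zero_eq_digitSum]

lemma cumDigitSum_succ (n : ℕ) : cumDigitSum (n + 1) = cumDigitSum n + digitSum n :=
  sum_range_succ _ _

lemma cumDigitSum_two_mul (n : ℕ) : cumDigitSum (2 * n) = 2 * cumDigitSum n + n := by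
  induction n with
  | zero => rfl
  | succ n ih =>
    rw [show 2 * (n + 1) = 2 * n + 1 + 1 by ring, cumDigitSum_succ, cumDigitSum_succ, ih,
      digitSum_two_mul, digitSum_two_mul_add_one, cumDigitSum_succ]
    ring

lemma cumDigitSum_two_mul_add_one (n : ℕ) :
    cumDigitSum (2 * n + 1) = 2 * cumDigitSum n + n + digitSum n := by
  rw [cumDigitSum_succ, cumDigitSum_two_mul, digitSum_two_mul]

def secondDiff (n d : ℕ) : ℤ :=
  cumDigitSum (2 * n + d) + cumDigitSum d - 2 * cumDigitSum (n + d)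

def skewSecondDiff (n d : ℕ) : ℤ :=
  cumDigitSum (2 * n + d + 1) + cumDigitSum d - cumDigitSum (n + d) - cumDigitSum (n + d + 1)

/- Each recurrence is a linear identity between instances of `cumDigitSum_two_mul`,
`cumDigitSum_two_mul_add_one` and `cumDigitSum_succ`, once `ring_nf` has brought the arguments of
`cumDigitSum` to a common normal form. -/

lemma secondDiff_two_mul_two_mul (c e : ℕ) :
    secondDiff (2 * c) (2 * e) = 2 * secondDiff c e := by
  have := cumDigitSum_two_mul (2 * c + e)
  have := cumDigitSum_two_mul e
  have := cumDigitSum_two_mul (c + e)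
  simp only [secondDiff]
  ring_nf at *
  omega

lemma secondDiff_two_mul_two_mul_add_one (c e : ℕ) :
    secondDiff (2 * c) (2 * e + 1) = secondDiff c e + secondDiff c (e + 1) := by
  have := cumDigitSum_two_mul_add_one (2 * c + e)
  have := cumDigitSum_two_mul_add_one e
  have := cumDigitSum_two_mul_add_one (c + e)
  have := cumDigitSum_succ e
  have := cumDigitSum_succ (2 * c + e)
  have := cumDigitSum_succ (c + e)
  simp only [secondDiff]
  ring_nf at *
  omega

lemma secondDiff_two_mul_add_one_two_mul (c e : ℕ) :
    secondDiff (2 * c + 1) (2 * e) = 2 * skewSecondDiff c e + 1 := by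
  have := cumDigitSum_two_mul (2 * c + e + 1)
  have := cumDigitSum_two_mul e
  have := cumDigitSum_two_mul_add_one (c + e)
  have := cumDigitSum_succ (c + e)
  simp only [secondDiff, skewSecondDiff]
  ring_nf at *
  omega

lemma secondDiff_two_mul_add_one_two_mul_add_one (c e : ℕ) :
    secondDiff (2 * c + 1) (2 * e + 1) = secondDiff c (e + 1) + secondDiff (c + 1) e - 1 := by
  have := cumDigitSum_two_mul_add_one (2 * c + e + 1)
  have := cumDigitSum_two_mul_add_one e
  have := cumDigitSum_two_mul (c + e + 1)
  have := cumDigitSum_succ e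
  have := cumDigitSum_succ (2 * c + e + 1)
  simp only [secondDiff]
  ring_nf at *
  omega

lemma skewSecondDiff_two_mul_two_mul (c e : ℕ) :
    skewSecondDiff (2 * c) (2 * e) = secondDiff c e + skewSecondDiff c e := by
  have := cumDigitSum_two_mul_add_one (2 * c + e)
  have := cumDigitSum_two_mul e
  have := cumDigitSum_two_mul (c + e)
  have := cumDigitSum_two_mul_add_one (c + e)
  have := cumDigitSum_succ (2 * c + e)
  have := cumDigitSum_succ (c + e)
  simp only [secondDiff, skewSecondDiff]
  ring_nf at *
  omega

lemma skewSecondDiff_two_mul_two_mul_add_one (c e : ℕ) :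
    skewSecondDiff (2 * c) (2 * e + 1) = skewSecondDiff c e + secondDiff c (e + 1) := by
  have := cumDigitSum_two_mul (2 * c + e + 1)
  have := cumDigitSum_two_mul_add_one e
  have := cumDigitSum_two_mul_add_one (c + e)
  have := cumDigitSum_two_mul (c + e + 1)
  have := cumDigitSum_succ e
  have := cumDigitSum_succ (c + e)
  simp only [secondDiff, skewSecondDiff]
  ring_nf at *
  omega

lemma skewSecondDiff_two_mul_add_one_two_mul (c e : ℕ) :
    skewSecondDiff (2 * c + 1) (2 * e) = skewSecondDiff c e + secondDiff (c + 1) e := by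
  have := cumDigitSum_two_mul_add_one (2 * c + e + 1)
  have := cumDigitSum_two_mul e
  have := cumDigitSum_two_mul_add_one (c + e)
  have := cumDigitSum_two_mul (c + e + 1)
  have := cumDigitSum_succ (2 * c + e + 1)
  have := cumDigitSum_succ (c + e)
  simp only [secondDiff, skewSecondDiff]
  ring_nf at *
  omega

lemma skewSecondDiff_two_mul_add_one_two_mul_add_one (c e : ℕ) :
    skewSecondDiff (2 * c + 1) (2 * e + 1) = skewSecondDiff c (e + 1) + secondDiff (c + 1) e := by
  have := cumDigitSum_two_mul (2 * c + e + 2)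
  have := cumDigitSum_two_mul_add_one e
  have := cumDigitSum_two_mul (c + e + 1)
  have := cumDigitSum_two_mul_add_one (c + e + 1)
  have := cumDigitSum_succ e
  have := cumDigitSum_succ (c + e + 1)
  simp only [secondDiff, skewSecondDiff]
  ring_nf at *
  omega

lemma size_two_mul_add_one (x : ℕ) : (2 * x + 1).size = x.size + 1 := by
  simpa [Nat.bit_val] using @Nat.size_bit true x (by simp [Nat.bit_val])

lemma size_two_mul_add_one_eq_size_two_mul {x : ℕ} (hx : x ≠ 0) :
    (2 * x + 1).size = (2 * x).size := by
  rw [size_two_mul_add_one]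
  simpa [Nat.bit_val] using (@Nat.size_bit false x (by simpa [Nat.bit_val] using hx)).symm

def secondDiffExp (n : ℕ) : ℕ := (2 * n - 1).size

def skewSecondDiffExp (n : ℕ) : ℕ := (2 * n + 1).size

lemma secondDiffExp_succ (n : ℕ) : secondDiffExp (n + 1) = skewSecondDiffExp n := by
  simp only [secondDiffExp, skewSecondDiffExp, show 2 * (n + 1) - 1 = 2 * n + 1 by omega]

lemma secondDiffExp_two_mul {n : ℕ} (hn : n ≠ 0) : secondDiffExp (2 * n) = secondDiffExp n + 1 := by
  rw [secondDiffExp, secondDiffExp, show 2 * (2 * n) - 1 = 2 * (2 * n - 1) + 1 by omega,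
    size_two_mul_add_one]

lemma secondDiffExp_two_mul_add_one {n : ℕ} (hn : n ≠ 0) :
    secondDiffExp (2 * n + 1) = skewSecondDiffExp n + 1 := by
  rw [secondDiffExp, skewSecondDiffExp, show 2 * (2 * n + 1) - 1 = 2 * (2 * n) + 1 by omega,
    size_two_mul_add_one, size_two_mul_add_one_eq_size_two_mul hn]

lemma skewSecondDiffExp_two_mul {n : ℕ} (hn : n ≠ 0) :
    skewSecondDiffExp (2 * n) = skewSecondDiffExp n + 1 := by
  rw [skewSecondDiffExp, skewSecondDiffExp, size_two_mul_add_one,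
    size_two_mul_add_one_eq_size_two_mul hn]

lemma skewSecondDiffExp_two_mul_add_one (n : ℕ) :
    skewSecondDiffExp (2 * n + 1) = skewSecondDiffExp n + 1 := by
  rw [skewSecondDiffExp, skewSecondDiffExp, size_two_mul_add_one]

lemma secondDiffExp_le_skewSecondDiffExp (n : ℕ) : secondDiffExp n ≤ skewSecondDiffExp n :=
  Nat.size_le_size (by omega)

lemma secondDiffExp_ne_zero {n : ℕ} (hn : n ≠ 0) : secondDiffExp n ≠ 0 :=
  (Nat.size_pos.2 (by omega)).ne'

lemma skewSecondDiffExp_ne_zero (n : ℕ) : skewSecondDiffExp n ≠ 0 :=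
  (Nat.size_pos.2 (by omega)).ne'

lemma pow_succ_dvd_two_mul_iff (j x : ℕ) : 2 ^ (j + 1) ∣ 2 * x ↔ 2 ^ j ∣ x := by
  rw [pow_succ', Nat.mul_dvd_mul_iff_left two_pos]

lemma two_dvd_of_pow_dvd {j x : ℕ} (hj : j ≠ 0) (h : 2 ^ j ∣ x) : 2 ∣ x :=
  (dvd_pow_self 2 hj).trans h

lemma two_dvd_or_of_pow_dvd_or {j x y : ℕ} (hj : j ≠ 0) (h : 2 ^ j ∣ x ∨ 2 ^ j ∣ y) :
    2 ∣ x ∨ 2 ∣ y :=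
  h.imp (two_dvd_of_pow_dvd hj) (two_dvd_of_pow_dvd hj)

def SecondDiffSpec (n d : ℕ) : Prop :=
  secondDiff n d ≤ n ∧
    (secondDiff n d = n ↔ 2 ^ secondDiffExp n ∣ d ∨ 2 ^ secondDiffExp n ∣ d + 2 * n)

def SkewSecondDiffSpec (n d : ℕ) : Prop :=
  skewSecondDiff n d ≤ n ∧
    (skewSecondDiff n d = n ↔ 2 ^ skewSecondDiffExp n ∣ d ∨ 2 ^ skewSecondDiffExp n ∣ d + 2 * n + 1)

lemma secondDiff_zero (d : ℕ) : secondDiff 0 d = 0 := by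
  simp only [secondDiff, mul_zero, zero_add]
  ring

lemma skewSecondDiff_zero (d : ℕ) : skewSecondDiff 0 d = 0 := by
  simp only [skewSecondDiff, mul_zero, zero_add]
  ring

lemma secondDiffSpec_zero (d : ℕ) : SecondDiffSpec 0 d := by
  simp [SecondDiffSpec, secondDiff_zero, secondDiffExp]

lemma skewSecondDiffSpec_zero (d : ℕ) : SkewSecondDiffSpec 0 d := by
  rw [SkewSecondDiffSpec, skewSecondDiff_zero, skewSecondDiffExp, mul_zero, zero_add,
    Nat.size_one, pow_one]
  omega

section

variable {c e : ℕ}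

lemma secondDiffSpec_two_mul_two_mul (hc : c ≠ 0) (h : SecondDiffSpec c e) :
    SecondDiffSpec (2 * c) (2 * e) := by
  obtain ⟨hle, heq⟩ := h
  rw [SecondDiffSpec, secondDiff_two_mul_two_mul, secondDiffExp_two_mul hc,
    show 2 * e + 2 * (2 * c) = 2 * (e + 2 * c) by ring, pow_succ_dvd_two_mul_iff,
    pow_succ_dvd_two_mul_iff, ← heq]
  push_cast
  omega

lemma secondDiffSpec_two_mul_two_mul_add_one (hc : c ≠ 0) (h₁ : SecondDiffSpec c e)
    (h₂ : SecondDiffSpec c (e + 1)) : SecondDiffSpec (2 * c) (2 * e + 1) := by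
  have hK := secondDiffExp_ne_zero hc
  have := h₁.1
  have := h₂.1
  rw [SecondDiffSpec, secondDiff_two_mul_two_mul_add_one]
  push_cast
  refine ⟨by omega, fun h => ?_, fun h => ?_⟩
  · have := two_dvd_or_of_pow_dvd_or hK (h₁.2.1 (by omega))
    have := two_dvd_or_of_pow_dvd_or hK (h₂.2.1 (by omega))
    omega
  · have := two_dvd_or_of_pow_dvd_or (secondDiffExp_ne_zero (by omega)) h
    omega

lemma secondDiffSpec_two_mul_add_one_two_mul (h : SkewSecondDiffSpec c e) :
    SecondDiffSpec (2 * c + 1) (2 * e) := by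
  rcases eq_or_ne c 0 with rfl | hc
  · rw [SecondDiffSpec, secondDiff_two_mul_add_one_two_mul, skewSecondDiff_zero]
    simp [secondDiffExp]
  · rw [SecondDiffSpec, secondDiff_two_mul_add_one_two_mul, secondDiffExp_two_mul_add_one hc,
      show 2 * e + 2 * (2 * c + 1) = 2 * (e + 2 * c + 1) by ring, pow_succ_dvd_two_mul_iff,
      pow_succ_dvd_two_mul_iff, ← h.2]
    have := h.1
    push_cast
    omega

lemma secondDiffSpec_two_mul_add_one_two_mul_add_one (h₁ : SecondDiffSpec c (e + 1))
    (h₂ : SecondDiffSpec (c + 1) e) : SecondDiffSpec (2 * c + 1) (2 * e + 1) := by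
  have hodd : ¬(2 ^ secondDiffExp (2 * c + 1) ∣ 2 * e + 1 ∨
      2 ^ secondDiffExp (2 * c + 1) ∣ 2 * e + 1 + 2 * (2 * c + 1)) := fun h => by
    have := two_dvd_or_of_pow_dvd_or (secondDiffExp_ne_zero (by omega)) h
    omega
  rw [SecondDiffSpec, secondDiff_two_mul_add_one_two_mul_add_one, iff_false_right hodd]
  have := h₁.1
  have := h₂.1
  push_cast
  omega

lemma dvd_of_pow_skewSecondDiffExp_dvd {n x : ℕ} (h : 2 ^ skewSecondDiffExp n ∣ x) :
    2 ^ secondDiffExp n ∣ x :=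
  (pow_dvd_pow 2 (secondDiffExp_le_skewSecondDiffExp n)).trans h

lemma skewSecondDiffSpec_two_mul_two_mul (hc : c ≠ 0) (hA : SecondDiffSpec c e)
    (hB : SkewSecondDiffSpec c e) : SkewSecondDiffSpec (2 * c) (2 * e) := by
  have := hA.1
  have := hB.1
  rw [SkewSecondDiffSpec, skewSecondDiff_two_mul_two_mul, skewSecondDiffExp_two_mul hc,
    pow_succ_dvd_two_mul_iff]
  push_cast
  refine ⟨by omega, fun h => ?_, fun h => ?_⟩
  · refine (hB.2.1 (by omega)).imp_right fun h' => ?_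
    have := two_dvd_or_of_pow_dvd_or (secondDiffExp_ne_zero hc) (hA.2.1 (by omega))
    have := two_dvd_of_pow_dvd (skewSecondDiffExp_ne_zero c) h'
    omega
  · rcases h with h | h
    · have := hA.2.2 (Or.inl (dvd_of_pow_skewSecondDiffExp_dvd h))
      have := hB.2.2 (Or.inl h)
      omega
    · have := two_dvd_of_pow_dvd (Nat.succ_ne_zero _) h
      omega

lemma skewSecondDiffSpec_two_mul_two_mul_add_one (hc : c ≠ 0) (hB : SkewSecondDiffSpec c e)
    (hA : SecondDiffSpec c (e + 1)) : SkewSecondDiffSpec (2 * c) (2 * e + 1) := by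
  have := hA.1
  have := hB.1
  rw [SkewSecondDiffSpec, skewSecondDiff_two_mul_two_mul_add_one, skewSecondDiffExp_two_mul hc,
    show 2 * e + 1 + 2 * (2 * c) + 1 = 2 * (e + 2 * c + 1) by ring, pow_succ_dvd_two_mul_iff]
  push_cast
  refine ⟨by omega, fun h => ?_, fun h => ?_⟩
  · refine (hB.2.1 (by omega)).imp_left fun h' => ?_
    have := two_dvd_or_of_pow_dvd_or (secondDiffExp_ne_zero hc) (hA.2.1 (by omega))
    have := two_dvd_of_pow_dvd (skewSecondDiffExp_ne_zero c) h'
    omega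
  · rcases h with h | h
    · have := two_dvd_of_pow_dvd (Nat.succ_ne_zero _) h
      omega
    · have := hA.2.2 (Or.inr (dvd_of_pow_skewSecondDiffExp_dvd (by rwa [add_right_comm])))
      have := hB.2.2 (Or.inr h)
      omega

lemma skewSecondDiffSpec_two_mul_add_one_two_mul (hB : SkewSecondDiffSpec c e)
    (hA : SecondDiffSpec (c + 1) e) : SkewSecondDiffSpec (2 * c + 1) (2 * e) := by
  rw [SecondDiffSpec, secondDiffExp_succ] at hA
  have := hA.1
  have := hB.1
  rw [SkewSecondDiffSpec, skewSecondDiff_two_mul_add_one_two_mul,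
    skewSecondDiffExp_two_mul_add_one, pow_succ_dvd_two_mul_iff]
  push_cast
  refine ⟨by omega, fun h => ?_, fun h => ?_⟩
  · refine (hB.2.1 (by omega)).elim Or.inl fun h' => ?_
    refine (hA.2.1 (by omega)).imp_right fun h'' => ?_
    have := two_dvd_of_pow_dvd (skewSecondDiffExp_ne_zero c) h'
    have := two_dvd_of_pow_dvd (skewSecondDiffExp_ne_zero c) h''
    omega
  · rcases h with h | h
    · have := hA.2.2 (Or.inl h)
      have := hB.2.2 (Or.inl h)
      omega
    · have := two_dvd_of_pow_dvd (Nat.succ_ne_zero _) h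
      omega

lemma skewSecondDiffSpec_two_mul_add_one_two_mul_add_one (hB : SkewSecondDiffSpec c (e + 1))
    (hA : SecondDiffSpec (c + 1) e) : SkewSecondDiffSpec (2 * c + 1) (2 * e + 1) := by
  rw [SecondDiffSpec, secondDiffExp_succ] at hA
  have := hA.1
  have := hB.1
  rw [SkewSecondDiffSpec, skewSecondDiff_two_mul_add_one_two_mul_add_one,
    skewSecondDiffExp_two_mul_add_one,
    show 2 * e + 1 + 2 * (2 * c + 1) + 1 = 2 * (e + 1 + 2 * c + 1) by ring,
    pow_succ_dvd_two_mul_iff]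
  push_cast
  refine ⟨by omega, fun h => ?_, fun h => ?_⟩
  · refine (hB.2.1 (by omega)).imp_left fun h' => ?_
    have := two_dvd_or_of_pow_dvd_or (skewSecondDiffExp_ne_zero c) (hA.2.1 (by omega))
    have := two_dvd_of_pow_dvd (skewSecondDiffExp_ne_zero c) h'
    omega
  · rcases h with h | h
    · have := two_dvd_of_pow_dvd (Nat.succ_ne_zero _) h
      omega
    · have := hA.2.2 (Or.inr (by rwa [show e + 2 * (c + 1) = e + 1 + 2 * c + 1 by ring]))
      have := hB.2.2 (Or.inr h)
      omega

end

lemma secondDiffSpec_of_forall_lt {n d : ℕ}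
    (ih : ∀ n' d', 2 * n' + d' < 2 * n + d → SecondDiffSpec n' d' ∧ SkewSecondDiffSpec n' d') :
    SecondDiffSpec n d := by
  obtain ⟨c, rfl | rfl⟩ := n.even_or_odd' <;> obtain ⟨e, rfl | rfl⟩ := d.even_or_odd'
  · rcases eq_or_ne c 0 with rfl | hc
    · exact secondDiffSpec_zero _
    · exact secondDiffSpec_two_mul_two_mul hc (ih c e (by omega)).1
  · rcases eq_or_ne c 0 with rfl | hc
    · exact secondDiffSpec_zero _
    · exact secondDiffSpec_two_mul_two_mul_add_one hc (ih c e (by omega)).1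
        (ih c (e + 1) (by omega)).1
  · exact secondDiffSpec_two_mul_add_one_two_mul (ih c e (by omega)).2
  · exact secondDiffSpec_two_mul_add_one_two_mul_add_one (ih c (e + 1) (by omega)).1
      (ih (c + 1) e (by omega)).1

lemma skewSecondDiffSpec_of_forall_lt {n d : ℕ}
    (ihB : ∀ n' d', 2 * n' + d' < 2 * n + d → SkewSecondDiffSpec n' d')
    (ihA : ∀ n' d', 2 * n' + d' ≤ 2 * n + d → SecondDiffSpec n' d') :
    SkewSecondDiffSpec n d := by
  obtain ⟨c, rfl | rfl⟩ := n.even_or_odd' <;> obtain ⟨e, rfl | rfl⟩ := d.even_or_odd'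
  · rcases eq_or_ne c 0 with rfl | hc
    · exact skewSecondDiffSpec_zero _
    · exact skewSecondDiffSpec_two_mul_two_mul hc (ihA c e (by omega)) (ihB c e (by omega))
  · rcases eq_or_ne c 0 with rfl | hc
    · exact skewSecondDiffSpec_zero _
    · exact skewSecondDiffSpec_two_mul_two_mul_add_one hc (ihB c e (by omega))
        (ihA c (e + 1) (by omega))
  · exact skewSecondDiffSpec_two_mul_add_one_two_mul (ihB c e (by omega))
      (ihA (c + 1) e (by omega))
  · exact skewSecondDiffSpec_two_mul_add_one_two_mul_add_one (ihB c (e + 1) (by omega))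
      (ihA (c + 1) e (by omega))

/- Strong induction on `2 * n + d`; `SecondDiffSpec` comes first at each level because
`skewSecondDiff 1 0` is computed from `secondDiff 1 0`, at the same level. -/
lemma secondDiffSpec_and_skewSecondDiffSpec (n d : ℕ) :
    SecondDiffSpec n d ∧ SkewSecondDiffSpec n d := by
  induction h : 2 * n + d using Nat.strong_induction_on generalizing n d with
  | _ N ih =>
    subst h
    have hA : ∀ n' d', 2 * n' + d' ≤ 2 * n + d → SecondDiffSpec n' d' := fun n' d' h' =>
      secondDiffSpec_of_forall_lt fun n'' d'' h'' => ih _ (by omega) n'' d'' rfl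
    exact ⟨hA n d le_rfl, skewSecondDiffSpec_of_forall_lt (fun n' d' h' => (ih _ h' n' d' rfl).2) hA⟩

lemma secondDiffExp_eq_of_le_two_pow {n k : ℕ} (hk1 : n ≤ 2 ^ k) (hk2 : 2 ^ k < 2 * n) :
    secondDiffExp n = k + 1 :=
  le_antisymm (Nat.size_le.2 (by rw [pow_succ]; omega)) (Nat.lt_size.2 (by omega))

lemma natCast_add_modEq_iff (l d n : ℕ) :
    ((l + d : ℕ) : ℤ) ≡ l [ZMOD n] ↔ n ∣ d := by
  rw [Int.modEq_comm, Int.modEq_iff_dvd]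
  push_cast
  rw [add_sub_cancel_left, Int.natCast_dvd_natCast]

lemma natCast_add_modEq_neg_iff (l d n : ℕ) :
    ((l + d : ℕ) : ℤ) ≡ -l [ZMOD n] ↔ n ∣ d + 2 * l := by
  rw [Int.modEq_comm, Int.modEq_iff_dvd, ← Int.natCast_dvd_natCast]
  push_cast
  ring_nf

end DigitSum

theorem SWeight_zero_midpoint_eq_iff_general (m l : ℕ) (hlm : l ≤ m) (k : ℕ)
    (hk1 : l ≤ 2 ^ k) (hk2 : 2 ^ k < 2 * l) :
    SWeight 0 (m + l) + SWeight 0 (m - l) - 2 * SWeight 0 m = (l:ℝ)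
      ↔ (m:ℤ) ≡ (l:ℤ) [ZMOD (2:ℤ) ^ (k + 1)] ∨ (m:ℤ) ≡ -(l:ℤ) [ZMOD (2:ℤ) ^ (k + 1)] := by
  obtain ⟨d, rfl⟩ := Nat.exists_eq_add_of_le hlm
  have hS : SWeight 0 (l + d + l) + SWeight 0 (l + d - l) - 2 * SWeight 0 (l + d)
      = (DigitSum.secondDiff l d : ℝ) := by
    simp only [DigitSum.SWeight_zero_eq_cumDigitSum, DigitSum.secondDiff, show l + d + l = 2 * l + d by ring,
      Nat.add_sub_cancel_left]
    push_cast
    ring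
  rw [show (2 : ℤ) ^ (k + 1) = ((2 ^ (k + 1) : ℕ) : ℤ) by push_cast; rfl, DigitSum.natCast_add_modEq_iff,
    DigitSum.natCast_add_modEq_neg_iff, hS, ← Int.cast_natCast, Int.cast_inj,
    (DigitSum.secondDiffSpec_and_skewSecondDiffSpec l d).1.2, DigitSum.secondDiffExp_eq_of_le_two_pow hk1 hk2]

theorem SWeight_zero_midpoint_eq_iff (m l : ℕ) (hl : 1 ≤ l) (hlm : l ≤ m) (k : ℕ)
    (hk1 : l ≤ 2 ^ k) (hk2 : 2 ^ k < 2 * l) :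
    SWeight 0 (m + l) + SWeight 0 (m - l) - 2 * SWeight 0 m = (l:ℝ)
      ↔ (m:ℤ) ≡ (l:ℤ) [ZMOD (2:ℤ) ^ (k + 1)] ∨ (m:ℤ) ≡ -(l:ℤ) [ZMOD (2:ℤ) ^ (k + 1)] :=
  SWeight_zero_midpoint_eq_iff_general m l hlm k hk1 hk2
end

section
/- For 0 ≤ p ≤ 1, the function g_p(x) = 2x - 1 + (1-x)^{p+1} - x^{p+1} satisfies g_p(x) ≤ 0 for all x ∈ [1/2, 1]; i.e., 2x - 1 + (1-x)^{p+1} ≤ x^{p+1} on [1/2, 1]. -/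
open Real Set

theorem g_nonpos (p : ℝ) (hp0 : 0 ≤ p) (hp1 : p ≤ 1) (x : ℝ)
    (hx1 : 1 / 2 ≤ x) (hx2 : x ≤ 1) :
    2 * x - 1 + (1 - x) ^ (p + 1) ≤ x ^ (p + 1) := by
  set q : ℝ := p + 1 with hq
  have hq1 : 1 ≤ q := by linarith
  have hq2 : q ≤ 2 := by linarith
  set f : ℝ → ℝ := fun y => y ^ q - (1 - y) ^ q - (2 * y - 1) with hf
  have hint : interior (Icc (1/2 : ℝ) 1) = Ioo (1/2 : ℝ) 1 := interior_Icc
  have hconc : ConcaveOn ℝ (Icc (1/2 : ℝ) 1) f := by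
    apply concaveOn_of_hasDerivWithinAt2_nonpos (f' := fun y => q * y ^ (q-1) + q * (1-y) ^ (q-1) - 2)
      (f'' := fun y => q * (q-1) * y ^ (q-2) - q * (q-1) * (1-y) ^ (q-2)) (convex_Icc _ _)
    · intro y hy
      have h1 : ContinuousAt (fun y : ℝ => y ^ q) y :=
        Real.continuousAt_rpow_const _ _ (Or.inr (by linarith))
      have h2 : ContinuousAt (fun y : ℝ => (1 - y) ^ q) y :=
        (Real.continuousAt_rpow_const (1 - y) q (Or.inr (by linarith))).comp
          ((continuous_const.sub continuous_id).continuousAt)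
      exact ((h1.sub h2).sub (by fun_prop)).continuousWithinAt
    · intro y hy
      rw [hint] at hy
      have hy0 : (0:ℝ) < y := by have := hy.1; linarith
      have hy1 : (0:ℝ) < 1 - y := by have := hy.2; linarith
      have d1 : HasDerivAt (fun y : ℝ => y ^ q) (q * y ^ (q-1)) y :=
        Real.hasDerivAt_rpow_const (Or.inl hy0.ne')
      have d2 : HasDerivAt (fun y : ℝ => (1 - y) ^ q) ((q * (1-y) ^ (q-1)) * (-1)) y :=
        (Real.hasDerivAt_rpow_const (x := 1 - y) (Or.inl hy1.ne')).comp y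
          ((hasDerivAt_id y).const_sub 1)
      have d3 : HasDerivAt (fun y : ℝ => 2 * y - 1) 2 y := by
        simpa using ((hasDerivAt_id y).const_mul 2).sub_const 1
      have := (d1.sub d2).sub d3
      have heq : q * y ^ (q-1) - (q * (1-y) ^ (q-1)) * (-1) - 2
          = q * y ^ (q-1) + q * (1-y) ^ (q-1) - 2 := by ring
      rw [heq] at this
      exact this.hasDerivWithinAt
    · intro y hy
      rw [hint] at hy
      have hy0 : (0:ℝ) < y := by have := hy.1; linarith
      have hy1 : (0:ℝ) < 1 - y := by have := hy.2; linarith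
      have d1 : HasDerivAt (fun y : ℝ => y ^ (q-1)) ((q-1) * y ^ (q-1-1)) y :=
        Real.hasDerivAt_rpow_const (Or.inl hy0.ne')
      have d2 : HasDerivAt (fun y : ℝ => (1 - y) ^ (q-1)) (((q-1) * (1-y) ^ (q-1-1)) * (-1)) y :=
        (Real.hasDerivAt_rpow_const (x := 1 - y) (Or.inl hy1.ne')).comp y
          ((hasDerivAt_id y).const_sub 1)
      have := ((d1.const_mul q).add (d2.const_mul q)).sub_const 2
      have heq : q * ((q-1) * y ^ (q-1-1)) + q * (((q-1) * (1-y) ^ (q-1-1)) * (-1))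
          = q * (q-1) * y ^ (q-2) - q * (q-1) * (1-y) ^ (q-2) := by
        norm_num; ring
      rw [heq] at this
      exact this.hasDerivWithinAt
    · intro y hy
      rw [hint] at hy
      have hy0 : (0:ℝ) < y := by have := hy.1; linarith
      have hy1 : (0:ℝ) < 1 - y := by have := hy.2; linarith
      have h12 := hy.1
      have hle : y ^ (q-2) ≤ (1-y) ^ (q-2) :=
        Real.rpow_le_rpow_of_nonpos hy1 (by linarith) (by linarith)
      have hq' : 0 ≤ q * (q-1) := mul_nonneg (by linarith) (by linarith)
      nlinarith [mul_le_mul_of_nonneg_left hle hq']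
  have hf_half : f (1/2) = 0 := by norm_num [hf]
  have hf_one : f 1 = 0 := by
    simp [hf, Real.zero_rpow (by positivity : q ≠ 0), Real.one_rpow]
    norm_num
  have ha : (0:ℝ) ≤ 2 - 2 * x := by linarith
  have hb : (0:ℝ) ≤ 2 * x - 1 := by linarith
  have hmem1 : (1/2 : ℝ) ∈ Icc (1/2 : ℝ) 1 := by norm_num
  have hmem2 : (1 : ℝ) ∈ Icc (1/2 : ℝ) 1 := by norm_num
  have := hconc.2 hmem1 hmem2 ha hb (by ring)
  rw [smul_eq_mul, smul_eq_mul, smul_eq_mul, smul_eq_mul, hf_half, hf_one] at this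
  have hx : (2 - 2*x) * (1/2) + (2*x - 1) * 1 = x := by ring
  rw [hx] at this
  simp only [hf, mul_zero] at this
  linarith [this]
end

section
/- For 0 < p < 1, the function g_p(x) = 2x - 1 + (1-x)^{p+1} - x^{p+1} is strictly convex on [1/2, 1], with g_p(1/2) = g_p(1) = 0; consequently g_p(x) < 0 for 1/2 < x < 1. -/
open Set

/-!
Since `p - 1 < 0`, the second derivative `g_p'' x = p (p + 1) ((1 - x) ^ (p - 1) - x ^ (p - 1))`
is positive for `1/2 < x < 1`, so `g_p` is strictly convex on `[1/2, 1]`; a strictly convex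
function vanishing at both endpoints of an interval is negative inside it.
-/

theorem StrictConvexOn.neg_of_mem_Ioo {f : ℝ → ℝ} {a b x : ℝ} (hf : StrictConvexOn ℝ (Icc a b) f)
    (ha : f a ≤ 0) (hb : f b ≤ 0) (hx : x ∈ Ioo a b) : f x < 0 := by
  have hab : a < b := hx.1.trans hx.2
  calc f x < max (f a) (f b) :=
        hf.lt_on_openSegment (left_mem_Icc.2 hab.le) (right_mem_Icc.2 hab.le) hab.ne
          (by rwa [openSegment_eq_Ioo hab])
    _ ≤ 0 := max_le ha hb

noncomputable def g (p x : ℝ) : ℝ := 2 * x - 1 + (1 - x) ^ (p + 1) - x ^ (p + 1)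

theorem g_half (p : ℝ) : g p (1/2) = 0 := by
  norm_num [g]

theorem g_one {p : ℝ} (hp : 0 ≤ p) : g p 1 = 0 := by
  rw [g, sub_self, Real.zero_rpow (by linarith), Real.one_rpow]
  ring

theorem hasDerivAt_g {p : ℝ} (hp : 0 ≤ p) (x : ℝ) :
    HasDerivAt (g p) (2 - (p + 1) * ((1 - x) ^ p + x ^ p)) x := by
  have hp' : 1 ≤ p + 1 := by linarith
  have h : HasDerivAt (g p) _ x := ((((hasDerivAt_id' x).const_mul 2).sub_const 1).add
    (((hasDerivAt_id' x).const_sub 1).rpow_const (Or.inr hp'))).sub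
    ((hasDerivAt_id' x).rpow_const (Or.inr hp'))
  refine h.congr_deriv ?_
  rw [add_sub_cancel_right]
  ring

theorem deriv_g {p : ℝ} (hp : 0 ≤ p) :
    deriv (g p) = fun x => 2 - (p + 1) * ((1 - x) ^ p + x ^ p) :=
  funext fun x => (hasDerivAt_g hp x).deriv

theorem hasDerivAt_deriv_g {p x : ℝ} (hp : 0 ≤ p) (hx0 : 0 < x) (hx1 : x < 1) :
    HasDerivAt (deriv (g p)) ((p + 1) * p * ((1 - x) ^ (p - 1) - x ^ (p - 1))) x := by
  rw [deriv_g hp]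
  have h : HasDerivAt (fun x => 2 - (p + 1) * ((1 - x) ^ p + x ^ p)) _ x :=
    (((((hasDerivAt_id' x).const_sub 1).rpow_const (p := p) (Or.inl (sub_ne_zero.2 hx1.ne'))).add
    ((hasDerivAt_id' x).rpow_const (p := p) (Or.inl hx0.ne'))).const_mul (p + 1)).const_sub 2
  exact h.congr_deriv (by ring)

theorem deriv2_g_pos {p x : ℝ} (hp0 : 0 < p) (hp1 : p < 1) (hx : x ∈ Ioo (1/2) 1) :
    0 < deriv^[2] (g p) x := by
  obtain ⟨hx0, hx1⟩ := hx
  have hlt : x ^ (p - 1) < (1 - x) ^ (p - 1) :=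
    Real.rpow_lt_rpow_of_neg (by linarith) (by linarith) (by linarith)
  rw [Function.iterate_succ_apply, Function.iterate_one,
    (hasDerivAt_deriv_g hp0.le (by linarith) hx1).deriv]
  have := sub_pos.2 hlt
  positivity

theorem strictConvexOn_g {p : ℝ} (hp0 : 0 < p) (hp1 : p < 1) :
    StrictConvexOn ℝ (Icc (1/2) 1) (g p) :=
  strictConvexOn_of_deriv2_pos (convex_Icc _ _)
    (fun x _ => (hasDerivAt_g hp0.le x).continuousAt.continuousWithinAt)
    fun x hx => deriv2_g_pos hp0 hp1 (by rwa [interior_Icc] at hx)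

theorem g_strictConvex (p : ℝ) (hp0 : 0 < p) (hp1 : p < 1) :
    StrictConvexOn ℝ (Set.Icc (1/2 : ℝ) 1)
      (fun x : ℝ => 2 * x - 1 + (1 - x) ^ (p + 1) - x ^ (p + 1)) ∧
    (2 * (1/2 : ℝ) - 1 + (1 - 1/2 : ℝ) ^ (p + 1) - (1/2 : ℝ) ^ (p + 1) = 0) ∧
    (2 * (1 : ℝ) - 1 + (1 - 1 : ℝ) ^ (p + 1) - (1 : ℝ) ^ (p + 1) = 0) ∧
    ∀ x : ℝ, 1/2 < x → x < 1 →
      2 * x - 1 + (1 - x) ^ (p + 1) - x ^ (p + 1) < 0 :=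
  ⟨strictConvexOn_g hp0 hp1, g_half p, g_one hp0.le, fun _ hx1 hx2 =>
    (strictConvexOn_g hp0 hp1).neg_of_mem_Ioo (g_half p).le (g_one hp0.le).le ⟨hx1, hx2⟩⟩
end

section
/- If a and a + 2^k have the same k least significant binary digits, then s_p(a + 2^k) - s_p(a) = 2^{kp}(s_p(t+1) - s_p(t)), where t = ⌊a/2^k⌋. -/
open Finset

private lemma testBit_div_pow (n k i : ℕ) : (n / 2 ^ k).testBit i = n.testBit (k + i) := by
  simp only [Nat.testBit_eq_decide_div_mod_eq, Nat.div_div_eq_div_mul, ← pow_add]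

private lemma sWeight_eq_big (p : ℝ) (n N : ℕ) (h : n ≤ N) :
    sWeight p n = ∑ j ∈ Finset.range N, if n.testBit j then (2:ℝ) ^ (p * (j:ℝ)) else 0 := by
  unfold sWeight
  refine Finset.sum_subset (Finset.range_subset_range.2 h) fun j _ hj => ?_
  simp only [Finset.mem_range, not_lt] at hj
  have hb : n.testBit j = false :=
    Nat.testBit_lt_two_pow ((Nat.lt_two_pow_self (n := n)).trans_le (Nat.pow_le_pow_right two_pos hj))
  simp [hb]

/-- Split off the low `k` bits. -/
private lemma sWeight_split (p : ℝ) (n k : ℕ) :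
    sWeight p n = (∑ j ∈ Finset.range k, if n.testBit j then (2:ℝ) ^ (p * (j:ℝ)) else 0)
      + (2:ℝ) ^ (p * (k:ℝ)) * sWeight p (n / 2 ^ k) := by
  rw [sWeight_eq_big p n (k + n) (Nat.le_add_left n k), Finset.sum_range_add]
  congr 1
  rw [sWeight_eq_big p (n / 2 ^ k) n (Nat.div_le_self n _), Finset.mul_sum]
  refine Finset.sum_congr rfl fun i _ => ?_
  rw [testBit_div_pow]
  split
  · push_cast
    rw [mul_add, Real.rpow_add two_pos]
  · ring

theorem sWeight_add_pow_two (p : ℝ) (a k : ℕ) :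
    sWeight p (a + 2 ^ k) - sWeight p a
      = (2:ℝ) ^ (p * (k:ℝ)) * (sWeight p (a / 2 ^ k + 1) - sWeight p (a / 2 ^ k)) := by
  have hdiv : (a + 2 ^ k) / 2 ^ k = a / 2 ^ k + 1 :=
    Nat.add_div_right _ (pow_pos (by norm_num) k)
  have hlow : ∀ j, j < k → (a + 2 ^ k).testBit j = a.testBit j := by
    intro j hj
    have h1 := Nat.testBit_mod_two_pow (a + 2 ^ k) k j
    rw [Nat.add_mod_right, Nat.testBit_mod_two_pow] at h1
    simpa [hj] using h1.symm
  rw [sWeight_split p (a + 2 ^ k) k, sWeight_split p a k, hdiv]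
  have h2 : (∑ j ∈ Finset.range k, if (a + 2 ^ k).testBit j then (2:ℝ) ^ (p * (j:ℝ)) else 0)
      = ∑ j ∈ Finset.range k, if a.testBit j then (2:ℝ) ^ (p * (j:ℝ)) else 0 := by
    refine Finset.sum_congr rfl fun j hj => ?_
    rw [hlow j (Finset.mem_range.1 hj)]
  rw [h2]
  ring
end
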